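/- Let M ∈ ℝ^{p×q} and let M_k be any matrix of rank at most k. Then the spectral norm satisfies ‖M − M_k‖₂ ≥ σ_{k+1}(M), where σ_{k+1}(M) is the (k+1)-st singular value of M (Eckart–Young lower bound). -/

import Mathlib

open Matrix
open scoped Matrix.Norms.L2Operator

/-- `singularValue M j` is the `j`-th largest singular value of the real matrix `M`
(0-indexed): the square roots of the eigenvalues of `Mᵀ M` in decreasing order. -/
noncomputable def singularValue {p q : Type*} [Fintype p] [Fintype q] [DecidableEq q]
    (M : Matrix p q ℝ) (j : Fin (Fintype.card q)) : ℝ :=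
  Real.sqrt ((Matrix.isHermitian_conjTranspose_mul_self M : (Mᵀ * M).IsHermitian).eigenvalues₀
    (Tuple.sort (Matrix.isHermitian_conjTranspose_mul_self M : (Mᵀ * M).IsHermitian).eigenvalues₀ j.rev))

/-!
Let `λ₀ ≥ λ₁ ≥ ⋯` be the eigenvalues of `Mᵀ M`, so that `σ_k = √λ_k`. The eigenvectors for
`λ₀, …, λ_k` span a subspace `V` of dimension `k + 1`, and expanding in the eigenbasis gives
`‖M x‖² = ⟪x, Mᵀ M x⟫ ≥ λ_k ‖x‖²` on `V`. The kernel of `M_k` has codimension at most `k`, so it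
meets `V` in some `x ≠ 0`, and then `σ_k ‖x‖ ≤ ‖M x‖ = ‖(M - M_k) x‖ ≤ ‖M - M_k‖ ‖x‖`.
-/

open Module Submodule
open scoped InnerProductSpace RealInnerProductSpace

theorem LinearMap.exists_mem_ne_zero_apply_eq_zero_of_finrank_range_lt
    {K V V₂ : Type*} [DivisionRing K] [AddCommGroup V] [Module K V] [AddCommGroup V₂]
    [Module K V₂] [FiniteDimensional K V] (f : V →ₗ[K] V₂) {W : Submodule K V}
    (h : finrank K (range f) < finrank K W) : ∃ x ∈ W, x ≠ 0 ∧ f x = 0 := by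
  have hle : finrank K (range (f.domRestrict W)) ≤ finrank K (range f) :=
    Submodule.finrank_mono (LinearMap.range_comp_le_range _ _)
  obtain ⟨y, hy, hy0⟩ := Submodule.exists_mem_ne_zero_of_ne_bot
    (LinearMap.ker_ne_bot_of_finrank_lt (f := (f.domRestrict W).rangeRestrict) (by omega))
  exact ⟨y, y.2, by simpa using hy0, by simpa using hy⟩

theorem Orthonormal.inner_eq_zero_of_mem_span_image {𝕜 ι E : Type*} [RCLike 𝕜]
    [NormedAddCommGroup E] [InnerProductSpace 𝕜 E] {v : ι → E} (hv : Orthonormal 𝕜 v)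
    {s : Set ι} {i : ι} (hi : i ∉ s) {x : E} (hx : x ∈ span 𝕜 (v '' s)) : ⟪v i, x⟫_𝕜 = 0 := by
  obtain ⟨l, hl, rfl⟩ := Finsupp.mem_span_image_iff_linearCombination 𝕜 |>.mp hx
  exact inner_eq_zero_symm.mp (hv.inner_finsupp_eq_zero hi hl)

theorem OrthonormalBasis.finrank_span_image {𝕜 ι E : Type*} [RCLike 𝕜] [Fintype ι]
    [NormedAddCommGroup E] [InnerProductSpace 𝕜 E] (b : OrthonormalBasis ι 𝕜 E)
    (s : Set ι) [Fintype s] : finrank 𝕜 (span 𝕜 (b '' s)) = Fintype.card s := by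
  rw [Set.image_eq_range]
  exact finrank_span_eq_card (b.orthonormal.linearIndependent.comp _ Subtype.val_injective)

section Eigenbasis

variable {ι E : Type*} [Fintype ι] [NormedAddCommGroup E] [InnerProductSpace ℝ E]
  (b : OrthonormalBasis ι ℝ E) {T : E →ₗ[ℝ] E} {μ : ι → ℝ}

theorem OrthonormalBasis.inner_self_apply_eq_sum (hT : ∀ i, T (b i) = μ i • b i) (x : E) :
    ⟪x, T x⟫ = ∑ i, μ i * ⟪b i, x⟫ ^ 2 := by
  have hTx : T x = ∑ i, (μ i * ⟪b i, x⟫) • b i := by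
    conv_lhs => rw [← b.sum_repr' x]
    simp only [map_sum, map_smul, hT, smul_smul, mul_comm]
  simp only [hTx, inner_sum, inner_smul_right, real_inner_comm (b _) x]
  exact Finset.sum_congr rfl fun i _ => by ring

theorem OrthonormalBasis.mul_norm_sq_le_inner_self_apply (hT : ∀ i, T (b i) = μ i • b i)
    {c : ℝ} {x : E} (hx : x ∈ span ℝ (b '' {i | c ≤ μ i})) : c * ‖x‖ ^ 2 ≤ ⟪x, T x⟫ := by
  rw [b.inner_self_apply_eq_sum hT, ← b.sum_sq_inner_right, Finset.mul_sum]
  refine Finset.sum_le_sum fun i _ => ?_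
  by_cases hi : c ≤ μ i
  · exact mul_le_mul_of_nonneg_right hi (sq_nonneg _)
  · simp [b.orthonormal.inner_eq_zero_of_mem_span_image hi hx]

end Eigenbasis

/-- `eigenvalues₀` is already antitone, so sorting it increasingly and reading it backwards
changes nothing. -/
theorem Matrix.IsHermitian.eigenvalues₀_sort_rev {𝕜 n : Type*} [RCLike 𝕜] [Fintype n]
    [DecidableEq n] {A : Matrix n n 𝕜} (hA : A.IsHermitian) (j : Fin (Fintype.card n)) :
    hA.eigenvalues₀ (Tuple.sort hA.eigenvalues₀ j.rev) = hA.eigenvalues₀ j := by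
  have hsort := Tuple.comp_sort_eq_comp_iff_monotone (σ := Fin.revPerm) |>.mpr
    (hA.eigenvalues₀_antitone.comp Fin.rev_anti)
  simpa using congrFun hsort.symm j.rev

theorem Matrix.rank_eq_finrank_range_toEuclideanLin {𝕜 m n : Type*} [RCLike 𝕜] [Fintype m]
    [Fintype n] [DecidableEq n] (M : Matrix m n 𝕜) :
    M.rank = finrank 𝕜 (LinearMap.range (toEuclideanLin M)) :=
  M.rank_eq_finrank_range_toLin (PiLp.basisFun 2 𝕜 m) (PiLp.basisFun 2 𝕜 n)

theorem Matrix.inner_toEuclideanLin_transpose_mul_self {m n : Type*} [Fintype m] [Fintype n]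
    [DecidableEq n] (M : Matrix m n ℝ) (x : EuclideanSpace ℝ n) :
    ⟪x, toEuclideanLin (Mᵀ * M) x⟫ = ‖toEuclideanLin M x‖ ^ 2 := by
  classical
  rw [← conjTranspose_eq_transpose_of_trivial, toLpLin_mul_same, LinearMap.comp_apply,
    toEuclideanLin_conjTranspose_eq_adjoint, LinearMap.adjoint_inner_right,
    real_inner_self_eq_norm_sq]

section SingularValue

variable {m n : Type*} [Fintype m] [Fintype n] [DecidableEq n]

theorem singularValue_eq_sqrt_eigenvalues₀ (M : Matrix m n ℝ) (hA : (Mᵀ * M).IsHermitian)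
    (j : Fin (Fintype.card n)) : singularValue M j = √(hA.eigenvalues₀ j) :=
  congrArg Real.sqrt (hA.eigenvalues₀_sort_rev j)

theorem exists_le_finrank_forall_singularValue_mul_norm_le (M : Matrix m n ℝ)
    (j : Fin (Fintype.card n)) :
    ∃ V : Submodule ℝ (EuclideanSpace ℝ n), (j : ℕ) + 1 ≤ finrank ℝ V ∧
      ∀ x ∈ V, singularValue M j * ‖x‖ ≤ ‖toEuclideanLin M x‖ := by
  have hA : (Mᵀ * M).IsHermitian := isHermitian_conjTranspose_mul_self M
  have hT := isSymmetric_toEuclideanLin_iff.mpr hA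
  set b := hT.eigenvectorBasis finrank_euclideanSpace
  set μ := hT.eigenvalues finrank_euclideanSpace
  refine ⟨span ℝ (b '' {i | μ j ≤ μ i}), ?_, fun x hx => ?_⟩
  · classical
    rw [b.finrank_span_image, Fintype.card_subtype, ← Fin.card_Iic]
    exact Finset.card_le_card fun i hi => Finset.mem_filter.mpr
      ⟨Finset.mem_univ i, hT.eigenvalues_antitone _ (Finset.mem_Iic.mp hi)⟩
  · have hRayleigh := b.mul_norm_sq_le_inner_self_apply
      (fun i => by simpa only [RCLike.ofReal_real_eq_id, id] using
        hT.apply_eigenvectorBasis finrank_euclideanSpace i) hx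
    rw [inner_toEuclideanLin_transpose_mul_self] at hRayleigh
    rw [singularValue_eq_sqrt_eigenvalues₀ M hA]
    calc √(μ j) * ‖x‖ = √(μ j * ‖x‖ ^ 2) := by
          rw [Real.sqrt_mul' _ (sq_nonneg _), Real.sqrt_sq (norm_nonneg _)]
      _ ≤ √(‖toEuclideanLin M x‖ ^ 2) := Real.sqrt_le_sqrt hRayleigh
      _ = ‖toEuclideanLin M x‖ := Real.sqrt_sq (norm_nonneg _)

end SingularValue

/-- Eckart–Young lower bound: for any matrix `M_k` of rank at most `k`, the spectral
norm error `‖M − M_k‖₂` is at least the `(k+1)`-st singular value of `M`. -/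
theorem eckart_young_lower_bound (p q : ℕ) (M Mk : Matrix (Fin p) (Fin q) ℝ)
    (k : ℕ) (hk : k < Fintype.card (Fin q)) (hrank : Mk.rank ≤ k) :
    singularValue M ⟨k, hk⟩ ≤ ‖M - Mk‖ := by
  obtain ⟨V, hV, hσ⟩ := exists_le_finrank_forall_singularValue_mul_norm_le M ⟨k, hk⟩
  have hker : finrank ℝ (LinearMap.range (toEuclideanLin Mk)) < finrank ℝ V := by
    rw [← Mk.rank_eq_finrank_range_toEuclideanLin]
    exact (Nat.lt_succ_of_le hrank).trans_le hV
  obtain ⟨x, hxV, hx0, hMkx⟩ :=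
    (toEuclideanLin Mk).exists_mem_ne_zero_apply_eq_zero_of_finrank_range_lt hker
  have hMx : toEuclideanLin M x = toEuclideanLin (M - Mk) x := by simp [hMkx]
  have hbound : singularValue M ⟨k, hk⟩ * ‖x‖ ≤ ‖M - Mk‖ * ‖x‖ :=
    calc singularValue M ⟨k, hk⟩ * ‖x‖ ≤ ‖toEuclideanLin (M - Mk) x‖ := hMx ▸ hσ x hxV
      _ ≤ ‖M - Mk‖ * ‖x‖ := l2_opNorm_mulVec (M - Mk) x
  exact le_of_mul_le_mul_right hbound (norm_pos_iff.mpr hx0)
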